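/- Let (Ā_μ)_{μ>0} be a family of continuous matrix-valued symbols on ℝ^d converging pointwise to Ā as μ ↓ 0, and suppose that for some ℓ ≥ 1 and η ∈ (0,1], each Ā_μ admits a Taylor expansion |Ā_μ(iξ) − Σ_{n=0}^{ℓ} (iξ)^{⊗n}_{j₁…jₙ} ā^n_{μ;j₁…jₙ}| ≲ |ξ|^{ℓ+η/2} uniformly in μ > 0. Then for every n ≤ ℓ and every unit vector e ∈ ℝ^d, the limit lim_{μ↓0} e^{⊗n}_{j₁…jₙ} ā^n_{μ;j₁…jₙ} exists in ℝ, and the limiting coefficients ā^n satisfy |Ā(iξ) − Σ_{n=0}^{ℓ} (iξ)^{⊗n}_{j₁…jₙ} ā^n_{j₁…jₙ}| ≲ |ξ|^{ℓ+η/2}. Moreover, the coefficients in such an expansion of Ā are unique (as symmetric tensors). -/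

import Mathlib

open Filter


lemma vand_inv (N : ℕ) : ∃ W : Fin (N+1) → Fin (N+1) → ℂ,
    ∀ a : Fin (N+1) → ℂ, ∀ n, a n = ∑ k, W n k * ∑ m : Fin (N+1), (((k:ℕ):ℂ)+1)^(m:ℕ) * a m := by
  set v : Fin (N+1) → ℂ := fun k => ((k:ℕ):ℂ)+1 with hv
  have hvinj : Function.Injective v := by
    intro i j h
    simp only [hv, add_left_inj, Nat.cast_inj] at h
    exact Fin.ext h
  have hdet : IsUnit (Matrix.vandermonde v).det :=
    isUnit_iff_ne_zero.2 (Matrix.det_vandermonde_ne_zero_iff.2 hvinj)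
  refine ⟨fun n k => (Matrix.vandermonde v)⁻¹ n k, fun a n => ?_⟩
  have h1 : (Matrix.vandermonde v)⁻¹.mulVec ((Matrix.vandermonde v).mulVec a) = a := by
    rw [Matrix.mulVec_mulVec, Matrix.nonsing_inv_mul _ hdet, Matrix.one_mulVec]
  have h2 := congrFun h1 n
  rw [← h2]
  simp [Matrix.mulVec, dotProduct, Matrix.vandermonde, hv]

lemma small_rpow {q ε : ℝ} (hq : 0 < q) (hε : 0 < ε) : ∃ κ : ℝ, 0 < κ ∧ κ ≤ 1 ∧ κ ^ q ≤ ε := by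
  refine ⟨min 1 (ε ^ (1/q)), lt_min one_pos (Real.rpow_pos_of_pos hε _), min_le_left _ _, ?_⟩
  calc (min 1 (ε^(1/q)))^q ≤ (ε^(1/q))^q :=
        Real.rpow_le_rpow (le_min zero_le_one (Real.rpow_pos_of_pos hε _).le) (min_le_right _ _) hq.le
    _ = ε := by rw [← Real.rpow_mul hε.le, one_div_mul_cancel hq.ne', Real.rpow_one]

lemma extract_bound {N : ℕ} (W : Fin (N+1) → Fin (N+1) → ℂ)
    (hW : ∀ a : Fin (N+1) → ℂ, ∀ n, a n = ∑ k, W n k * ∑ m : Fin (N+1), (((k:ℕ):ℂ)+1)^(m:ℕ) * a m)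
    (D : ℕ → ℂ) (t c : ℝ) (ht : 0 ≤ t)
    (hb : ∀ k : Fin (N+1),
      ‖∑ m ∈ Finset.range (N+1), (((t*((k:ℕ)+1)) : ℝ) : ℂ)^m * D m‖ ≤ c)
    (n : Fin (N+1)) :
    t^(n:ℕ) * ‖D n‖ ≤ (∑ k, ‖W n k‖) * c := by
  set a : Fin (N+1) → ℂ := fun m => (t:ℂ)^(m:ℕ) * D m with ha
  have hbk : ∀ k : Fin (N+1), ‖∑ m : Fin (N+1), (((k:ℕ):ℂ)+1)^(m:ℕ) * a m‖ ≤ c := by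
    intro k
    have h := hb k
    rw [← Fin.sum_univ_eq_sum_range (fun m => (((t*((k:ℕ)+1)) : ℝ) : ℂ)^m * D m)] at h
    refine le_of_eq_of_le ?_ h
    congr 1
    refine Finset.sum_congr rfl fun m _ => ?_
    push_cast [mul_pow]
    ring
  calc t^(n:ℕ) * ‖D n‖ = ‖a n‖ := by
        simp [ha, norm_mul, norm_pow, abs_of_nonneg ht]
    _ = ‖∑ k, W n k * ∑ m : Fin (N+1), (((k:ℕ):ℂ)+1)^(m:ℕ) * a m‖ := by rw [← hW a n]
    _ ≤ ∑ k, ‖W n k‖ * ‖∑ m : Fin (N+1), (((k:ℕ):ℂ)+1)^(m:ℕ) * a m‖ := by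
        refine (norm_sum_le _ _).trans ?_
        simp [norm_mul]
    _ ≤ ∑ k, ‖W n k‖ * c := Finset.sum_le_sum fun k _ => mul_le_mul_of_nonneg_left (hbk k) (norm_nonneg _)
    _ = (∑ k, ‖W n k‖) * c := (Finset.sum_mul _ _ _).symm

set_option maxHeartbeats 1000000 in
/-- Abstract convergence of massive approximations of higher-order homogenized
coefficients: if the symbols `A_μ` admit Taylor expansions of order `ℓ + η/2` with
homogeneous coefficient forms `P_μ n` (encoding `ξ ↦ (iξ)^{⊗n} ā^n_μ`), uniformly in
`μ > 0`, and `A_μ → A` pointwise as `μ ↓ 0`, then each coefficient form converges as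
`μ ↓ 0`, the limit expansion holds for `A`, and the coefficients of such an expansion are
unique. -/
theorem stmt19 (d : ℕ) (hd : 1 ≤ d) (ℓ : ℕ) (hℓ : 1 ≤ ℓ) (η : ℝ) (hη : 0 < η) (hη1 : η ≤ 1)
    (A : ℝ → EuclideanSpace ℝ (Fin d) → ℂ) (Alim : EuclideanSpace ℝ (Fin d) → ℂ)
    (P : ℝ → ℕ → EuclideanSpace ℝ (Fin d) → ℂ)
    (hconv : ∀ ξ, Tendsto (fun μ => A μ ξ) (nhdsWithin 0 (Set.Ioi 0)) (nhds (Alim ξ)))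
    (hhom : ∀ μ ∈ Set.Ioi (0 : ℝ), ∀ n ≤ ℓ, ∀ t : ℝ, 0 < t → ∀ ξ,
      P μ n (t • ξ) = (t : ℂ) ^ n * P μ n ξ)
    (C : ℝ)
    (hexp : ∀ μ ∈ Set.Ioi (0 : ℝ), ∀ ξ,
      ‖A μ ξ - ∑ n ∈ Finset.range (ℓ + 1), P μ n ξ‖ ≤ C * ‖ξ‖ ^ ((ℓ : ℝ) + η / 2)) :
    (∀ n ≤ ℓ, ∀ e : EuclideanSpace ℝ (Fin d), ∃ L : ℂ,
      Tendsto (fun μ => P μ n e) (nhdsWithin 0 (Set.Ioi 0)) (nhds L)) ∧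
    (∃ Pl : ℕ → EuclideanSpace ℝ (Fin d) → ℂ,
      (∀ n ≤ ℓ, ∀ ξ, Tendsto (fun μ => P μ n ξ) (nhdsWithin 0 (Set.Ioi 0)) (nhds (Pl n ξ))) ∧
      ∃ C' : ℝ, 0 < C' ∧ ∀ ξ,
        ‖Alim ξ - ∑ n ∈ Finset.range (ℓ + 1), Pl n ξ‖ ≤ C' * ‖ξ‖ ^ ((ℓ : ℝ) + η / 2)) ∧
    (∀ Q Q' : ℕ → EuclideanSpace ℝ (Fin d) → ℂ,
      (∀ n ≤ ℓ, ∀ t : ℝ, 0 < t → ∀ ξ, Q n (t • ξ) = (t : ℂ) ^ n * Q n ξ) →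
      (∀ n ≤ ℓ, ∀ t : ℝ, 0 < t → ∀ ξ, Q' n (t • ξ) = (t : ℂ) ^ n * Q' n ξ) →
      (∃ c₁ : ℝ, ∀ ξ,
        ‖Alim ξ - ∑ n ∈ Finset.range (ℓ + 1), Q n ξ‖ ≤ c₁ * ‖ξ‖ ^ ((ℓ : ℝ) + η / 2)) →
      (∃ c₂ : ℝ, ∀ ξ,
        ‖Alim ξ - ∑ n ∈ Finset.range (ℓ + 1), Q' n ξ‖ ≤ c₂ * ‖ξ‖ ^ ((ℓ : ℝ) + η / 2)) →
      ∀ n ≤ ℓ, ∀ ξ, Q n ξ = Q' n ξ) := by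
  classical
  obtain ⟨W, hW⟩ := vand_inv ℓ
  haveI hFne : (nhdsWithin (0:ℝ) (Set.Ioi 0)).NeBot := nhdsGT_neBot 0
  set F := nhdsWithin (0:ℝ) (Set.Ioi 0) with hF
  set p : ℝ := (ℓ:ℝ) + η/2 with hpdef
  have hp0 : 0 < p := by positivity
  have hCabs : ∀ μ ∈ Set.Ioi (0:ℝ), ∀ ξ,
      ‖A μ ξ - ∑ n ∈ Finset.range (ℓ+1), P μ n ξ‖ ≤ |C| * ‖ξ‖ ^ p := fun μ hμ ξ =>
    (hexp μ hμ ξ).trans (mul_le_mul_of_nonneg_right (le_abs_self C)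
      (Real.rpow_nonneg (norm_nonneg _) _))
  -- key existence of limits
  have key : ∀ (n : ℕ) (e : EuclideanSpace ℝ (Fin d)), ∃ L : ℂ,
      n ≤ ℓ → Tendsto (fun μ => P μ n e) F (nhds L) := by
    intro n e
    by_cases hn : n ≤ ℓ
    swap
    · exact ⟨0, fun h => absurd h hn⟩
    have hnf : n < ℓ + 1 := Nat.lt_succ_of_le hn
    set nf : Fin (ℓ+1) := ⟨n, hnf⟩ with hnfdef
    set Mw : ℝ := ∑ k, ‖W nf k‖ with hMwdef
    have hMw0 : 0 ≤ Mw := Finset.sum_nonneg fun k _ => norm_nonneg _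
    set c₀ : ℝ := (((ℓ:ℝ)+1)*(‖e‖+1)) ^ p with hc₀def
    have hc₀0 : 0 ≤ c₀ := Real.rpow_nonneg (by positivity) _
    set q : ℝ := p - n with hqdef
    have hq0 : 0 < q := by
      have hcast : (n:ℝ) ≤ (ℓ:ℝ) := Nat.cast_le.2 hn
      simp only [hqdef, hpdef]; linarith
    have hcauchy : Cauchy (Filter.map (fun μ => P μ n e) F) := by
      rw [Metric.cauchy_iff]
      refine ⟨Filter.map_neBot, fun ε hε => ?_⟩
      obtain ⟨κ, hκ0, hκ1, hκq⟩ := small_rpow hq0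
        (show 0 < (ε/2)/(2*|C| *c₀*Mw + 1) by positivity)
      have hκn : 0 < κ ^ n := pow_pos hκ0 n
      set δ : ℝ := ε * κ^n / (8 * (Mw + 1)) with hδdef
      have hδ0 : 0 < δ := by positivity
      set pt : Fin (ℓ+1) → EuclideanSpace ℝ (Fin d) :=
        fun k => (κ * ((k:ℕ)+1)) • e with hptdef
      have h1 : ∀ᶠ μ in F, ∀ k : Fin (ℓ+1), dist (A μ (pt k)) (Alim (pt k)) < δ :=
        Filter.eventually_all.2 fun k => (Metric.tendsto_nhds.1 (hconv (pt k))) δ hδ0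
      have h2 : ∀ᶠ μ in F, μ ∈ Set.Ioi (0:ℝ) := self_mem_nhdsWithin
      have hsF := h2.and h1
      refine ⟨(fun μ => P μ n e) '' {μ | μ ∈ Set.Ioi (0:ℝ) ∧
        ∀ k : Fin (ℓ+1), dist (A μ (pt k)) (Alim (pt k)) < δ},
        Filter.image_mem_map hsF, ?_⟩
      rintro x ⟨μ, hμ, rfl⟩ y ⟨μ', hμ', rfl⟩
      set Dm : ℕ → ℂ := fun m => P μ m e - P μ' m e with hDmdef
      have hb : ∀ k : Fin (ℓ+1),
          ‖∑ m ∈ Finset.range (ℓ+1), (((κ*((k:ℕ)+1)) : ℝ) : ℂ)^m * Dm m‖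
            ≤ 2*(|C| *(c₀*κ^p)) + 2*δ := by
        intro k
        set s' : ℝ := κ * ((k:ℕ)+1) with hs'def
        have hs'0 : 0 < s' := by positivity
        have hhomsum : ∑ m ∈ Finset.range (ℓ+1), ((s' : ℝ) : ℂ)^m * Dm m
            = (∑ m ∈ Finset.range (ℓ+1), P μ m (s'•e))
              - ∑ m ∈ Finset.range (ℓ+1), P μ' m (s'•e) := by
          rw [← Finset.sum_sub_distrib]
          refine Finset.sum_congr rfl fun m hm => ?_
          have hm' : m ≤ ℓ := Nat.lt_succ_iff.1 (Finset.mem_range.1 hm)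
          rw [hhom μ hμ.1 m hm' s' hs'0 e, hhom μ' hμ'.1 m hm' s' hs'0 e]
          simp only [hDmdef]; ring
        have hnormpt : ‖s' • e‖ ^ p ≤ c₀ * κ^p := by
          have h₁ : ‖s' • e‖ = s' * ‖e‖ := by
            rw [norm_smul, Real.norm_eq_abs, abs_of_pos hs'0]
          have hk : ((k:ℕ):ℝ) + 1 ≤ (ℓ:ℝ) + 1 := by
            have := Nat.lt_succ_iff.1 k.isLt
            have : ((k:ℕ):ℝ) ≤ (ℓ:ℝ) := Nat.cast_le.2 this
            linarith
          have h₂ : ‖s' • e‖ ≤ κ * (((ℓ:ℝ)+1)*(‖e‖+1)) := by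
            rw [h₁, hs'def, mul_assoc]
            refine mul_le_mul_of_nonneg_left ?_ hκ0.le
            exact mul_le_mul hk (by linarith [norm_nonneg e]) (norm_nonneg e) (by positivity)
          calc ‖s' • e‖ ^ p ≤ (κ * (((ℓ:ℝ)+1)*(‖e‖+1))) ^ p :=
                Real.rpow_le_rpow (norm_nonneg _) h₂ hp0.le
            _ = κ^p * c₀ := by
                rw [Real.mul_rpow hκ0.le (by positivity)]
            _ = c₀ * κ^p := mul_comm _ _
        have e1 := hCabs μ hμ.1 (s'•e)
        have e2 := hCabs μ' hμ'.1 (s'•e)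
        have e3 : ‖A μ (s'•e) - A μ' (s'•e)‖ ≤ 2*δ := by
          have d1 := hμ.2 k
          have d2 := hμ'.2 k
          have hpteq : pt k = s' • e := rfl
          rw [hpteq] at d1 d2
          calc ‖A μ (s'•e) - A μ' (s'•e)‖ = dist (A μ (s'•e)) (A μ' (s'•e)) :=
                (dist_eq_norm _ _).symm
            _ ≤ dist (A μ (s'•e)) (Alim (s'•e)) + dist (Alim (s'•e)) (A μ' (s'•e)) :=
                dist_triangle _ _ _
            _ ≤ δ + δ := by rw [dist_comm (Alim (s'•e))]; exact add_le_add d1.le d2.le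
            _ = 2*δ := by ring
        rw [hhomsum]
        have key2 : (∑ m ∈ Finset.range (ℓ+1), P μ m (s'•e))
              - ∑ m ∈ Finset.range (ℓ+1), P μ' m (s'•e)
            = (A μ' (s'•e) - ∑ m ∈ Finset.range (ℓ+1), P μ' m (s'•e))
              - (A μ (s'•e) - ∑ m ∈ Finset.range (ℓ+1), P μ m (s'•e))
              + (A μ (s'•e) - A μ' (s'•e)) := by ring
        rw [key2]
        have hCp : |C| * ‖s'•e‖^p ≤ |C| * (c₀*κ^p) :=
          mul_le_mul_of_nonneg_left hnormpt (abs_nonneg C)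
        calc ‖_ - _ + (A μ (s'•e) - A μ' (s'•e))‖
            ≤ ‖(A μ' (s'•e) - ∑ m ∈ Finset.range (ℓ+1), P μ' m (s'•e))
              - (A μ (s'•e) - ∑ m ∈ Finset.range (ℓ+1), P μ m (s'•e))‖
              + ‖A μ (s'•e) - A μ' (s'•e)‖ := norm_add_le _ _
          _ ≤ (‖A μ' (s'•e) - ∑ m ∈ Finset.range (ℓ+1), P μ' m (s'•e)‖
              + ‖A μ (s'•e) - ∑ m ∈ Finset.range (ℓ+1), P μ m (s'•e)‖)
              + ‖A μ (s'•e) - A μ' (s'•e)‖ := add_le_add_left (norm_sub_le _ _) _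
          _ ≤ (|C| * (c₀*κ^p) + |C| * (c₀*κ^p)) + 2*δ :=
                add_le_add (add_le_add (e2.trans hCp) (e1.trans hCp)) e3
          _ = 2*(|C| *(c₀*κ^p)) + 2*δ := by ring
      have hext := extract_bound W hW Dm κ (2*(|C| *(c₀*κ^p)) + 2*δ) hκ0.le hb nf
      have hsplit : κ ^ p = κ^n * κ ^ q := by
        rw [show p = (n:ℝ) + q by simp [hqdef], Real.rpow_add hκ0, Real.rpow_natCast]
      rw [dist_eq_norm]
      have hval : ((nf : Fin (ℓ+1)) : ℕ) = n := rfl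
      rw [hval] at hext
      have hq0' : (0:ℝ) ≤ κ ^ q := Real.rpow_nonneg hκ0.le _
      have harith : Mw * (2*(|C| *(c₀*κ^p)) + 2*δ) < ε * κ^n := by
        have hK : (2*|C| *c₀*Mw + 1) * κ^q ≤ ε/2 := by
          have h := mul_le_mul_of_nonneg_left hκq
            (show (0:ℝ) ≤ 2*|C| *c₀*Mw + 1 by positivity)
          rwa [mul_comm (2*|C| *c₀*Mw + 1) (ε / 2 / (2 * |C| * c₀ * Mw + 1)),
            div_mul_cancel₀ _ (show (2*|C| *c₀*Mw + 1) ≠ 0 by positivity)] at h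
        have habsC : (0:ℝ) ≤ |C| := abs_nonneg C
        have h1' : Mw * (2*δ) ≤ ε * κ^n / 4 := by
          have heq : Mw * (2*δ) = (ε*κ^n) * (2*Mw/(8*(Mw+1))) := by
            rw [hδdef]; ring
          have hfrac : 2*Mw/(8*(Mw+1)) ≤ 1/4 := by
            rw [div_le_div_iff₀ (by positivity) (by norm_num)]
            linarith
          rw [heq]
          calc (ε*κ^n) * (2*Mw/(8*(Mw+1))) ≤ (ε*κ^n) * (1/4) :=
                mul_le_mul_of_nonneg_left hfrac (by positivity)
            _ = ε * κ^n / 4 := by ring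
        calc Mw * (2*(|C| *(c₀*κ^p)) + 2*δ)
            = (2*|C| *c₀*Mw)*κ^q*κ^n + Mw*(2*δ) := by rw [hsplit]; ring
          _ ≤ (2*|C| *c₀*Mw + 1)*κ^q*κ^n + ε * κ^n / 4 := by
              refine add_le_add (mul_le_mul_of_nonneg_right ?_ hκn.le) h1'
              exact mul_le_mul_of_nonneg_right (by linarith) hq0'
          _ ≤ (ε/2)*κ^n + ε * κ^n / 4 :=
              add_le_add_left (mul_le_mul_of_nonneg_right hK hκn.le) _
          _ < ε * κ^n := by nlinarith [mul_pos hε hκn]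
      have hlt : κ ^ n * ‖Dm n‖ < κ ^ n * ε :=
        lt_of_le_of_lt hext (harith.trans_eq (mul_comm _ _))
      show ‖Dm n‖ < ε
      exact (mul_lt_mul_iff_right₀ hκn).1 hlt
    obtain ⟨L, hL⟩ := CompleteSpace.complete hcauchy
    exact ⟨L, fun _ => hL⟩
  choose Pl hPl using key
  refine ⟨fun n hn e => ⟨Pl n e, hPl n e hn⟩, ⟨Pl, fun n hn ξ => hPl n ξ hn,
    |C|+1, by positivity, fun ξ => ?_⟩, ?_⟩
  · have hsum : Tendsto (fun μ => ∑ n ∈ Finset.range (ℓ+1), P μ n ξ) F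
        (nhds (∑ n ∈ Finset.range (ℓ+1), Pl n ξ)) :=
      tendsto_finset_sum _ fun i hi => hPl i ξ (Nat.lt_succ_iff.1 (Finset.mem_range.1 hi))
    have hts : Tendsto (fun μ => ‖A μ ξ - ∑ n ∈ Finset.range (ℓ+1), P μ n ξ‖) F
        (nhds ‖Alim ξ - ∑ n ∈ Finset.range (ℓ+1), Pl n ξ‖) := ((hconv ξ).sub hsum).norm
    refine le_of_tendsto hts ?_
    filter_upwards [self_mem_nhdsWithin] with μ hμ
    refine (hexp μ hμ ξ).trans (mul_le_mul_of_nonneg_right ?_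
      (Real.rpow_nonneg (norm_nonneg _) _))
    have := le_abs_self C
    linarith
  · rintro Q Q' hQ hQ' ⟨c₁, hc₁⟩ ⟨c₂, hc₂⟩ n hn ξ
    have hnf : n < ℓ + 1 := Nat.lt_succ_of_le hn
    set nf : Fin (ℓ+1) := ⟨n, hnf⟩ with hnfdef
    set Mw : ℝ := ∑ k, ‖W nf k‖ with hMwdef
    have hMw0 : 0 ≤ Mw := Finset.sum_nonneg fun k _ => norm_nonneg _
    set c₀ : ℝ := (((ℓ:ℝ)+1)*(‖ξ‖+1)) ^ p with hc₀def
    have hc₀0 : 0 ≤ c₀ := Real.rpow_nonneg (by positivity) _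
    set q : ℝ := p - n with hqdef
    have hq0 : 0 < q := by
      have hcast : (n:ℝ) ≤ (ℓ:ℝ) := Nat.cast_le.2 hn
      simp only [hqdef, hpdef]; linarith
    set Dm : ℕ → ℂ := fun m => Q m ξ - Q' m ξ with hDmdef
    set K : ℝ := Mw * ((|c₁|+|c₂|) * c₀) with hKdef
    have hK0 : 0 ≤ K := by positivity
    have hDbound : ∀ t : ℝ, 0 < t → ‖Dm n‖ ≤ K * t ^ q := by
      intro t ht0
      have hb : ∀ k : Fin (ℓ+1),
          ‖∑ m ∈ Finset.range (ℓ+1), (((t*((k:ℕ)+1)) : ℝ) : ℂ)^m * Dm m‖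
            ≤ (|c₁|+|c₂|) * (c₀ * t^p) := by
        intro k
        set s' : ℝ := t * ((k:ℕ)+1) with hs'def
        have hs'0 : 0 < s' := by positivity
        have hhomsum : ∑ m ∈ Finset.range (ℓ+1), ((s' : ℝ) : ℂ)^m * Dm m
            = (∑ m ∈ Finset.range (ℓ+1), Q m (s'•ξ))
              - ∑ m ∈ Finset.range (ℓ+1), Q' m (s'•ξ) := by
          rw [← Finset.sum_sub_distrib]
          refine Finset.sum_congr rfl fun m hm => ?_
          have hm' : m ≤ ℓ := Nat.lt_succ_iff.1 (Finset.mem_range.1 hm)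
          rw [hQ m hm' s' hs'0 ξ, hQ' m hm' s' hs'0 ξ]
          simp only [hDmdef]; ring
        have hnormpt : ‖s' • ξ‖ ^ p ≤ c₀ * t^p := by
          have h₁ : ‖s' • ξ‖ = s' * ‖ξ‖ := by
            rw [norm_smul, Real.norm_eq_abs, abs_of_pos hs'0]
          have hk : ((k:ℕ):ℝ) ≤ (ℓ:ℝ) := Nat.cast_le.2 (Nat.lt_succ_iff.1 k.isLt)
          have h₂ : ‖s' • ξ‖ ≤ t * (((ℓ:ℝ)+1)*(‖ξ‖+1)) := by
            rw [h₁, hs'def, mul_assoc]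
            refine mul_le_mul_of_nonneg_left ?_ ht0.le
            exact mul_le_mul (by linarith) (by linarith [norm_nonneg ξ]) (norm_nonneg ξ)
              (by positivity)
          calc ‖s' • ξ‖ ^ p ≤ (t * (((ℓ:ℝ)+1)*(‖ξ‖+1))) ^ p :=
                Real.rpow_le_rpow (norm_nonneg _) h₂ hp0.le
            _ = t^p * c₀ := by rw [Real.mul_rpow ht0.le (by positivity)]
            _ = c₀ * t^p := mul_comm _ _
        rw [hhomsum]
        have key2 : (∑ m ∈ Finset.range (ℓ+1), Q m (s'•ξ))
              - ∑ m ∈ Finset.range (ℓ+1), Q' m (s'•ξ)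
            = (Alim (s'•ξ) - ∑ m ∈ Finset.range (ℓ+1), Q' m (s'•ξ))
              - (Alim (s'•ξ) - ∑ m ∈ Finset.range (ℓ+1), Q m (s'•ξ)) := by ring
        rw [key2]
        have e1 : ‖Alim (s'•ξ) - ∑ m ∈ Finset.range (ℓ+1), Q m (s'•ξ)‖
            ≤ |c₁| * (c₀ * t^p) := by
          refine ((hc₁ (s'•ξ)).trans (mul_le_mul_of_nonneg_right (le_abs_self c₁)
            (Real.rpow_nonneg (norm_nonneg _) _))).trans ?_
          exact mul_le_mul_of_nonneg_left hnormpt (abs_nonneg c₁)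
        have e2 : ‖Alim (s'•ξ) - ∑ m ∈ Finset.range (ℓ+1), Q' m (s'•ξ)‖
            ≤ |c₂| * (c₀ * t^p) := by
          refine ((hc₂ (s'•ξ)).trans (mul_le_mul_of_nonneg_right (le_abs_self c₂)
            (Real.rpow_nonneg (norm_nonneg _) _))).trans ?_
          exact mul_le_mul_of_nonneg_left hnormpt (abs_nonneg c₂)
        calc ‖_ - _‖ ≤ ‖Alim (s'•ξ) - ∑ m ∈ Finset.range (ℓ+1), Q' m (s'•ξ)‖
              + ‖Alim (s'•ξ) - ∑ m ∈ Finset.range (ℓ+1), Q m (s'•ξ)‖ := norm_sub_le _ _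
          _ ≤ |c₂| * (c₀ * t^p) + |c₁| * (c₀ * t^p) := add_le_add e2 e1
          _ = (|c₁|+|c₂|) * (c₀ * t^p) := by ring
      have hext := extract_bound W hW Dm t ((|c₁|+|c₂|) * (c₀ * t^p)) ht0.le hb nf
      have hval : ((nf : Fin (ℓ+1)) : ℕ) = n := rfl
      rw [hval] at hext
      have htn : 0 < t ^ n := pow_pos ht0 n
      have hsplit : t ^ p = t^n * t ^ q := by
        rw [show p = (n:ℝ) + q by simp [hqdef], Real.rpow_add ht0, Real.rpow_natCast]
      rw [hsplit] at hext
      have hext2 : t^n * ‖Dm n‖ ≤ t^n * (K * t^q) := by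
        calc t^n * ‖Dm n‖ ≤ Mw * ((|c₁|+|c₂|) * (c₀ * (t^n * t^q))) := hext
          _ = t^n * (K * t^q) := by rw [hKdef]; ring
      exact (mul_le_mul_iff_right₀ htn).1 hext2
    have hzero : ‖Dm n‖ ≤ 0 := by
      refine le_of_forall_pos_le_add fun ε hε => ?_
      obtain ⟨t, ht0, ht1, htq⟩ := small_rpow hq0 (show 0 < ε/(K+1) by positivity)
      have := hDbound t ht0
      have h2 : K * t^q ≤ ε := by
        have : (K+1) * t^q ≤ (K+1) * (ε/(K+1)) :=
          mul_le_mul_of_nonneg_left htq (by positivity)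
        rw [mul_div_cancel₀ _ (by positivity : (K:ℝ)+1 ≠ 0)] at this
        nlinarith [Real.rpow_nonneg ht0.le q]
      linarith
    have : Dm n = 0 := norm_le_zero_iff.1 hzero
    exact sub_eq_zero.1 this
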